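/- Let (W_t)_{t≥0} be a real-valued stochastic process with E[W_t²] < ∞, E[W_t] = 0 and E[W_s W_t] = min(s, t) for all s, t ≥ 0. Then √n · Var(W̄_n) → ν₁ as n → ∞, where W̄_n = (1/(N_n − K_n + 1)) Σ_{i=0}^{N_n − K_n} (W_{(i+K_n)/n} − W_{i/n}). -/

import Mathlib

open MeasureTheory ProbabilityTheory Filter

/-- `K_n = ⌈c₁ √n⌉`. -/
noncomputable def Kn (c₁ : ℝ) (n : ℕ) : ℕ := ⌈c₁ * Real.sqrt n⌉₊

/-- `N_n = ⌈c₁ c₂ √n⌉`. -/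
noncomputable def Nn (c₁ c₂ : ℝ) (n : ℕ) : ℕ := ⌈c₁ * c₂ * Real.sqrt n⌉₊

/-- `ν₁ = c₁ (3c₂ - 4 + max((2 - c₂)³, 0)) / (3(c₂ - 1)²)`. -/
noncomputable def nu₁ (c₁ c₂ : ℝ) : ℝ :=
  c₁ * (3 * c₂ - 4 + max ((2 - c₂) ^ 3) 0) / (3 * (c₂ - 1) ^ 2)

/-- The block average of increments of the process `W`,
`W̄_n = (N_n - K_n + 1)⁻¹ ∑_{i=0}^{N_n - K_n} (W_{(i+K_n)/n} - W_{i/n})`. -/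
noncomputable def Wbar {Ω : Type*} (c₁ c₂ : ℝ) (W : ℝ → Ω → ℝ) (n : ℕ) (ω : Ω) : ℝ :=
  ((Nn c₁ c₂ n - Kn c₁ n + 1 : ℕ) : ℝ)⁻¹ *
    ∑ i ∈ Finset.range (Nn c₁ c₂ n - Kn c₁ n + 1),
      (W (((i + Kn c₁ n : ℕ) : ℝ) / n) ω - W ((i : ℝ) / n) ω)

/-! The increments `X_i = W_{(i+K)/n} - W_{i/n}` have covariance `(K - |i - j|)⁺ / n`, since the
mixed second difference of `min` is a tent function. Hence `Var W̄_n` is `M⁻² n⁻¹` times the tent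
sum `∑_{i,j<M} (K - |i - j|)⁺` with `M = N_n - K_n + 1`, which has the closed form
`max(M,K) min(M,K)² - (min(M,K)³ - min(M,K)) / 3`. As `M / √n → c₁(c₂ - 1)` and `K / √n → c₁`,
the cubic homogeneity of the leading term gives the limit of `√n Var W̄_n`, which equals `ν₁`. -/

open Topology

lemma min_add_sub_min_add_sub_min_add_add_min (x y h : ℝ) (hh : 0 ≤ h) :
    min (x + h) (y + h) - min (x + h) y - min x (y + h) + min x y = max (h - |x - y|) 0 := by
  rw [abs_eq_max_neg]
  simp only [min_def, max_def]
  split_ifs <;> linarith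

def tentSum (M K : ℕ) : ℤ :=
  ∑ i ∈ Finset.range M, ∑ j ∈ Finset.range M, max ((K : ℤ) - |(i : ℤ) - j|) 0

lemma two_mul_sum_range_max_sub (M K : ℕ) :
    2 * ∑ d ∈ Finset.range M, max ((K : ℤ) - (d + 1)) 0
      = 2 * K * min (M : ℤ) (K - 1) - min (M : ℤ) (K - 1) ^ 2 - min (M : ℤ) (K - 1) := by
  induction M with
  | zero =>
    rcases Nat.eq_zero_or_pos K with rfl | hK
    · norm_num
    · simp [min_eq_left (show (0 : ℤ) ≤ K - 1 by omega)]
  | succ M ih =>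
    rw [Finset.sum_range_succ, mul_add, ih]
    push_cast
    rcases le_or_gt ((M : ℤ) + 1) (K - 1) with h | h
    · rw [max_eq_left (by omega), min_eq_left h, min_eq_left (by omega)]
      ring
    · rw [max_eq_right (by omega), min_eq_right h.le, min_eq_right (by omega)]
      ring

lemma tentSum_succ (M K : ℕ) :
    tentSum (M + 1) K
      = tentSum M K + 2 * ∑ d ∈ Finset.range M, max ((K : ℤ) - (d + 1)) 0 + K := by
  have hrow : ∑ j ∈ Finset.range M, max ((K : ℤ) - |(M : ℤ) - j|) 0
      = ∑ d ∈ Finset.range M, max ((K : ℤ) - (d + 1)) 0 := by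
    rw [← Finset.sum_range_reflect]
    refine Finset.sum_congr rfl fun j hj ↦ ?_
    have hj : j < M := Finset.mem_range.1 hj
    rw [abs_of_nonneg (by omega), Nat.cast_sub (by omega), Nat.cast_sub (by omega)]
    ring_nf
  have hcol : ∑ i ∈ Finset.range M, max ((K : ℤ) - |(i : ℤ) - M|) 0
      = ∑ j ∈ Finset.range M, max ((K : ℤ) - |(M : ℤ) - j|) 0 := by
    simp only [abs_sub_comm]
  simp only [tentSum, Finset.sum_range_succ, Finset.sum_add_distrib, hcol, hrow, sub_self,
    abs_zero, sub_zero, max_eq_left (Nat.cast_nonneg (α := ℤ) K)]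
  ring

lemma three_mul_tentSum (M K : ℕ) :
    3 * tentSum M K
      = 3 * max (M : ℤ) K * min (M : ℤ) K ^ 2 - min (M : ℤ) K ^ 3 + min (M : ℤ) K := by
  induction M with
  | zero => simp [tentSum]
  | succ M ih =>
    rw [tentSum_succ, mul_add, mul_add, ih, two_mul_sum_range_max_sub]
    push_cast
    rcases le_or_gt ((M : ℤ) + 1) K with h | h
    · rw [min_eq_left h, max_eq_right h, min_eq_left (by omega), max_eq_right (by omega),
        min_eq_left (by omega)]
      ring
    · rw [min_eq_right h.le, max_eq_left h.le, min_eq_right (by omega), max_eq_left (by omega),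
        min_eq_right (by omega)]
      ring

section Increments

variable {Ω : Type*} {mΩ : MeasurableSpace Ω} {μ : Measure Ω} [IsProbabilityMeasure μ]
  {W : ℝ → Ω → ℝ}

lemma covariance_eq_min (hL2 : ∀ t, 0 ≤ t → MemLp (W t) 2 μ) (hmean : ∀ t, 0 ≤ t → μ[W t] = 0)
    (hcov : ∀ s t, 0 ≤ s → 0 ≤ t → ∫ ω, W s ω * W t ω ∂μ = min s t)
    {s t : ℝ} (hs : 0 ≤ s) (ht : 0 ≤ t) :
    cov[W s, W t; μ] = min s t := by
  rw [covariance_eq_sub (hL2 s hs) (hL2 t ht), hmean s hs, hmean t ht, mul_zero, sub_zero]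
  exact hcov s t hs ht

lemma covariance_increment_increment (hL2 : ∀ t, 0 ≤ t → MemLp (W t) 2 μ)
    (hmean : ∀ t, 0 ≤ t → μ[W t] = 0)
    (hcov : ∀ s t, 0 ≤ s → 0 ≤ t → ∫ ω, W s ω * W t ω ∂μ = min s t)
    {s t h : ℝ} (hs : 0 ≤ s) (ht : 0 ≤ t) (hh : 0 ≤ h) :
    cov[fun ω ↦ W (s + h) ω - W s ω, fun ω ↦ W (t + h) ω - W t ω; μ] = max (h - |s - t|) 0 := by
  have hsh : 0 ≤ s + h := add_nonneg hs hh
  have hth : 0 ≤ t + h := add_nonneg ht hh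
  rw [covariance_fun_sub_fun_sub (hL2 _ hsh) (hL2 s hs) (hL2 _ hth) (hL2 t ht),
    covariance_eq_min hL2 hmean hcov hsh hth, covariance_eq_min hL2 hmean hcov hsh ht,
    covariance_eq_min hL2 hmean hcov hs hth, covariance_eq_min hL2 hmean hcov hs ht]
  exact min_add_sub_min_add_sub_min_add_add_min s t h hh

lemma variance_average_increments (hL2 : ∀ t, 0 ≤ t → MemLp (W t) 2 μ)
    (hmean : ∀ t, 0 ≤ t → μ[W t] = 0)
    (hcov : ∀ s t, 0 ≤ s → 0 ≤ t → ∫ ω, W s ω * W t ω ∂μ = min s t) (M K n : ℕ) :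
    Var[fun ω ↦ (M : ℝ)⁻¹ * ∑ i ∈ Finset.range M,
        (W (((i + K : ℕ) : ℝ) / n) ω - W ((i : ℝ) / n) ω); μ]
      = (M : ℝ)⁻¹ ^ 2 * (tentSum M K / n) := by
  have hpt (i : ℕ) : 0 ≤ (i : ℝ) / n := by positivity
  have hshift (i : ℕ) : ((i + K : ℕ) : ℝ) / n = i / n + K / n := by push_cast; ring
  rw [variance_const_mul, variance_fun_sum'
    (X := fun i ω ↦ W (((i + K : ℕ) : ℝ) / n) ω - W ((i : ℝ) / n) ω)
    fun i _ ↦ (hL2 _ (hpt _)).sub (hL2 _ (hpt i))]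
  simp only [tentSum, hshift, covariance_increment_increment hL2 hmean hcov (hpt _) (hpt _)
    (hpt K), Int.cast_sum, Finset.sum_div]
  refine congrArg _ (Finset.sum_congr rfl fun i _ ↦ Finset.sum_congr rfl fun j _ ↦ ?_)
  rw [← sub_div, abs_div, Nat.abs_cast, ← sub_div, ← zero_div (n : ℝ),
    max_div_div_right (Nat.cast_nonneg n)]
  push_cast
  rfl

end Increments

/-- `∫∫_{[0,a]²} (b - |x - y|)⁺ dx dy` for `0 ≤ a, b`: the continuum version of `tentSum`. -/
noncomputable def tentIntegral (a b : ℝ) : ℝ := max a b * min a b ^ 2 - min a b ^ 3 / 3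

lemma tentSum_eq (M K : ℕ) : (tentSum M K : ℝ) = tentIntegral M K + min (M : ℝ) K / 3 := by
  have h := congrArg (fun z : ℤ ↦ (z : ℝ)) (three_mul_tentSum M K)
  push_cast at h
  rw [tentIntegral]
  linarith

lemma tentIntegral_mul_mul {s : ℝ} (hs : 0 ≤ s) (a b : ℝ) :
    tentIntegral (a * s) (b * s) = tentIntegral a b * s ^ 3 := by
  rw [tentIntegral, tentIntegral, ← max_mul_of_nonneg _ _ hs, ← min_mul_of_nonneg _ _ hs]
  ring

lemma sqrt_mul_inv_sq_mul_tentSum_div (M K n : ℕ) :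
    √n * ((M : ℝ)⁻¹ ^ 2 * (tentSum M K / n))
      = (tentIntegral (M / √n) (K / √n) + min (M / √n) (K / √n) / (3 * n)) / (M / √n) ^ 2 := by
  rcases Nat.eq_zero_or_pos n with rfl | hn
  · simp
  have hs : 0 < √(n : ℝ) := Real.sqrt_pos.2 (by exact_mod_cast hn)
  have hscaled (a b s : ℝ) (hs : 0 < s) :
      s * ((a * s)⁻¹ ^ 2 * ((tentIntegral (a * s) (b * s) + min (a * s) (b * s) / 3) / s ^ 2))
        = (tentIntegral a b + min a b / (3 * s ^ 2)) / a ^ 2 := by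
    rcases eq_or_ne a 0 with rfl | ha
    · simp
    rw [tentIntegral_mul_mul hs.le, ← min_mul_of_nonneg _ _ hs.le]
    field_simp
  have h := hscaled (M / √n) (K / √n) (√n) hs
  rwa [div_mul_cancel₀ _ hs.ne', div_mul_cancel₀ _ hs.ne', Real.sq_sqrt n.cast_nonneg,
    ← tentSum_eq] at h

lemma tendsto_natCeil_mul_sqrt_div_sqrt {c : ℝ} (hc : 0 ≤ c) :
    Tendsto (fun n : ℕ ↦ (⌈c * √n⌉₊ : ℝ) / √n) atTop (𝓝 c) := by
  have hinv : Tendsto (fun n : ℕ ↦ (√n)⁻¹) atTop (𝓝 0) :=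
    (Real.tendsto_sqrt_atTop.comp tendsto_natCast_atTop_atTop).inv_tendsto_atTop
  refine tendsto_of_tendsto_of_tendsto_of_le_of_le' tendsto_const_nhds
    (by simpa using hinv.const_add c) ?_ ?_
  all_goals
    filter_upwards [eventually_ge_atTop 1] with n hn
    have hs : 0 < √(n : ℝ) := Real.sqrt_pos.2 (by exact_mod_cast hn)
  · rw [le_div_iff₀ hs]
    exact Nat.le_ceil _
  · rw [div_le_iff₀ hs, add_mul, inv_mul_cancel₀ hs.ne']
    exact (Nat.ceil_lt_add_one (by positivity)).le

lemma tendsto_Nn_sub_Kn_add_one_div_sqrt {c₁ c₂ : ℝ} (hc₁ : 0 ≤ c₁) (hc₂ : 1 ≤ c₂) :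
    Tendsto (fun n : ℕ ↦ ((Nn c₁ c₂ n - Kn c₁ n + 1 : ℕ) : ℝ) / √n) atTop
      (𝓝 (c₁ * (c₂ - 1))) := by
  have hKN (n : ℕ) : Kn c₁ n ≤ Nn c₁ c₂ n :=
    Nat.ceil_le_ceil (le_mul_of_one_le_right (by positivity) hc₂ |>.trans_eq (by ring))
  have hinv : Tendsto (fun n : ℕ ↦ 1 / √n) atTop (𝓝 0) :=
    tendsto_const_nhds.div_atTop (Real.tendsto_sqrt_atTop.comp tendsto_natCast_atTop_atTop)
  have h := ((tendsto_natCeil_mul_sqrt_div_sqrt (mul_nonneg hc₁ (by linarith))).sub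
    (tendsto_natCeil_mul_sqrt_div_sqrt hc₁)).add hinv
  rw [add_zero, ← mul_sub_one] at h
  refine h.congr fun n ↦ ?_
  rw [Nat.cast_add, Nat.cast_sub (hKN n), Nat.cast_one, Nn, Kn]
  ring

lemma nu₁_eq_tentIntegral {c₁ c₂ : ℝ} (hc₁ : 0 < c₁) (hc₂ : 1 < c₂) :
    nu₁ c₁ c₂ = tentIntegral (c₁ * (c₂ - 1)) c₁ / (c₁ * (c₂ - 1)) ^ 2 := by
  have hc₂' : c₂ - 1 ≠ 0 := by linarith
  rw [nu₁, tentIntegral]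
  rcases le_total c₂ 2 with h | h
  · have hle : c₁ * (c₂ - 1) ≤ c₁ := by nlinarith
    rw [min_eq_left hle, max_eq_right hle, max_eq_left (pow_nonneg (by linarith) 3)]
    field_simp
    ring
  · have hle : c₁ ≤ c₁ * (c₂ - 1) := by nlinarith
    rw [min_eq_right hle, max_eq_left hle,
      max_eq_right (Odd.pow_nonpos (by decide) (by linarith))]
    field_simp
    ring

/-- For a centered, square-integrable process `W` with covariance
`E[W_s W_t] = min(s,t)`, one has `√n · Var(W̄_n) → ν₁`. -/
theorem sqrt_n_mul_variance_Wbar_tendsto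
    {Ω : Type*} [MeasureSpace Ω] [IsProbabilityMeasure (ℙ : Measure Ω)]
    (c₁ c₂ : ℝ) (hc₁ : 0 < c₁) (hc₂ : 1 < c₂)
    (W : ℝ → Ω → ℝ)
    (hWL2 : ∀ t : ℝ, 0 ≤ t → MemLp (W t) 2 ℙ)
    (hWmean : ∀ t : ℝ, 0 ≤ t → ∫ ω, W t ω ∂ℙ = 0)
    (hWcov : ∀ s t : ℝ, 0 ≤ s → 0 ≤ t → ∫ ω, W s ω * W t ω ∂ℙ = min s t) :
    Tendsto (fun n : ℕ => Real.sqrt n * variance (Wbar c₁ c₂ W n) ℙ)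
      atTop (nhds (nu₁ c₁ c₂)) := by
  have hM := tendsto_Nn_sub_Kn_add_one_div_sqrt hc₁.le hc₂.le
  have hK := tendsto_natCeil_mul_sqrt_div_sqrt hc₁.le
  have hmin := hM.min hK
  have hlim := ((((hM.max hK).mul (hmin.pow 2)).sub ((hmin.pow 3).div_const 3)).add
    (hmin.div_atTop (tendsto_natCast_atTop_atTop.const_mul_atTop three_pos))).div
    (hM.pow 2) (pow_ne_zero 2 (mul_pos hc₁ (sub_pos.2 hc₂)).ne')
  rw [add_zero, ← tentIntegral, ← nu₁_eq_tentIntegral hc₁ hc₂] at hlim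
  exact hlim.congr fun n ↦ (sqrt_mul_inv_sq_mul_tentSum_div _ (Kn c₁ n) n).symm.trans
    (congrArg _ (variance_average_increments hWL2 hWmean hWcov _ _ n).symm)
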